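/- Every total function Σ* → Γ* computed by a monotone register transducer can be computed by a planar reversible deterministic two-way finite transducer. -/

import Mathlib

namespace Planar2DFT

/-- Tape alphabet: input letters plus the two endmarkers `▷` and `◁`. -/
inductive Tape (A : Type) where
  | lend : Tape A
  | rend : Tape A
  | sym  : A → Tape A

/-- Edges of the transition profile `G(ρ, f)` on vertices `Q × Bool`
(`true` codes direction `+1`, `false` codes `-1`): an edge
`(q, -ρ q) → (r, ρ r)` for every `(q, r) ∈ f`. -/
def ProfileEdge {Q : Type} (ρ : Q → Bool) (f : Set (Q × Q)) :
    Q × Bool → Q × Bool → Prop :=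
  fun u v => ∃ p ∈ f, u = (p.1, !ρ p.1) ∧ v = (p.2, ρ p.2)

/-- The extension of a strict order on `Q` to `Q × Bool`:
`(q,i) < (r,j)` iff (`i = -1` and `j = 1`), or (`q < r` and `i = j = 1`),
or (`q > r` and `i = j = -1`). -/
def ExtLt {Q : Type} (lt : Q → Q → Prop) : Q × Bool → Q × Bool → Prop :=
  fun x y =>
    (x.2 = false ∧ y.2 = true) ∨
    (lt x.1 y.1 ∧ x.2 = true ∧ y.2 = true) ∨
    (lt y.1 x.1 ∧ x.2 = false ∧ y.2 = false)

/-- Planarity of a transition w.r.t. a direction map `ρ` and a strict total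
order `lt`: no vertices `u < r < v < s` with an edge between `u` and `v`
(in either direction) and an edge between `r` and `s` (in either direction). -/
def IsPlanar {Q : Type} (ρ : Q → Bool) (lt : Q → Q → Prop) (f : Set (Q × Q)) : Prop :=
  ¬ ∃ u r v s : Q × Bool, ExtLt lt u r ∧ ExtLt lt r v ∧ ExtLt lt v s ∧
      (ProfileEdge ρ f u v ∨ ProfileEdge ρ f v u) ∧
      (ProfileEdge ρ f r s ∨ ProfileEdge ρ f s r)

/-- Deterministic transition: a partial function. -/
def IsDet {Q : Type} (f : Set (Q × Q)) : Prop :=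
  ∀ q r r', (q, r) ∈ f → (q, r') ∈ f → r = r'

/-- Reversible transition: a partial injection. -/
def IsRev {Q : Type} (f : Set (Q × Q)) : Prop :=
  IsDet f ∧ ∀ q q' r, (q, r) ∈ f → (q', r) ∈ f → q = q'

/-- Edges of the glued graph `C(ρ, f, g)` on `Q × Fin 3`, levels `0, 1, 2`
coding `-1, 0, 1`: the copy of `G(ρ,f)` lives on levels `{0,1}` (side `+1`
corresponding to level `1`) and the copy of `G(ρ,g)` on levels `{1,2}`
(side `+1` corresponding to level `2`). -/
def GlueEdge {Q : Type} (ρ : Q → Bool) (f g : Set (Q × Q)) :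
    Q × Fin 3 → Q × Fin 3 → Prop :=
  fun x y =>
    (x.2 ≠ 2 ∧ y.2 ≠ 2 ∧
      ProfileEdge ρ f (x.1, decide (x.2 = 1)) (y.1, decide (y.2 = 1))) ∨
    (x.2 ≠ 0 ∧ y.2 ≠ 0 ∧
      ProfileEdge ρ g (x.1, decide (x.2 = 2)) (y.1, decide (y.2 = 2)))

/-- Gluing composition `f * g` of transitions: `(q, r) ∈ f * g` iff there is a
directed path from `(q, -ρ q)` to `(r, ρ r)` in the glued graph `C(ρ, f, g)`. -/
def glue {Q : Type} (ρ : Q → Bool) (f g : Set (Q × Q)) : Set (Q × Q) :=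
  {p | Relation.ReflTransGen (GlueEdge ρ f g)
        (p.1, if ρ p.1 then (0 : Fin 3) else 2)
        (p.2, if ρ p.2 then (2 : Fin 3) else 0)}

/-- The identity transition, unit of the gluing composition. -/
def idRel (Q : Type) : Set (Q × Q) := {p | p.1 = p.2}

/-- Iterated gluing powers of a transition, with `glpow ρ f 0 = idRel Q`. -/
def glpow {Q : Type} (ρ : Q → Bool) (f : Set (Q × Q)) : ℕ → Set (Q × Q)
  | 0 => idRel Q
  | n + 1 => glue ρ (glpow ρ f n) f

/-- A configuration of a two-way machine: the tape content to the left of the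
head, the current state, and the tape content to the right of the head. -/
abbrev Config (Q A : Type) := List (Tape A) × Q × List (Tape A)

/-- The tape encoding `▷ u ◁` of an input word `u`. -/
def tapeOf {A : Type} (u : List A) : List (Tape A) :=
  Tape.lend :: (u.map Tape.sym ++ [Tape.rend])

/-- A two-way (nondeterministic) finite transducer. -/
structure TwoWayTransducer (Q A B : Type) where
  ρ : Q → Bool
  init : Q
  init_fwd : ρ init = true
  final : Set Q
  δ : Tape A → Set (Q × List B × Q)

namespace TwoWayTransducer

variable {Q A B : Type}

/-- The transitions `⌊δ⌋(a)` of the underlying automaton. -/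
def rel (T : TwoWayTransducer Q A B) (a : Tape A) : Set (Q × Q) :=
  {p | ∃ w, (p.1, w, p.2) ∈ T.δ a}

def Deterministic (T : TwoWayTransducer Q A B) : Prop :=
  ∀ a, IsDet (T.rel a)

def Reversible (T : TwoWayTransducer Q A B) : Prop :=
  ∀ a, IsRev (T.rel a)

def Planar (T : TwoWayTransducer Q A B) : Prop :=
  ∃ lt : Q → Q → Prop, IsStrictTotalOrder Q lt ∧
    ∀ a : A, IsPlanar T.ρ lt (T.rel (Tape.sym a))

/-- One step of the two-way transducer, labelled by the output word. -/
def Step (T : TwoWayTransducer Q A B) (c : Config Q A) (w : List B)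
    (c' : Config Q A) : Prop :=
  ∃ a u v q r, (q, w, r) ∈ T.δ a ∧
    ((T.ρ q = true ∧ T.ρ r = true ∧ c = (u, q, a :: v) ∧ c' = (u ++ [a], r, v)) ∨
     (T.ρ q = true ∧ T.ρ r = false ∧ c = (u, q, a :: v) ∧ c' = (u, r, a :: v)) ∨
     (T.ρ q = false ∧ T.ρ r = false ∧ c = (u ++ [a], q, v) ∧ c' = (u, r, a :: v)) ∨
     (T.ρ q = false ∧ T.ρ r = true ∧ c = (u ++ [a], q, v) ∧ c' = (u ++ [a], r, v)))

/-- Multi-step runs, accumulating the concatenated output. -/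
inductive Run (T : TwoWayTransducer Q A B) : Config Q A → List B → Config Q A → Prop
  | refl (c : Config Q A) : Run T c [] c
  | step {c₁ w₁ c₂ w₂ c₃} : Run T c₁ w₁ c₂ → T.Step c₂ w₂ c₃ → Run T c₁ (w₁ ++ w₂) c₃

/-- The pair `(u, v)` is realized by `T`. -/
def Realizes (T : TwoWayTransducer Q A B) (u : List A) (v : List B) : Prop :=
  ∃ qf ∈ T.final, T.Run ([], T.init, tapeOf u) v (tapeOf u, qf, [])

/-- `T` computes the partial function `f`. -/
def Computes (T : TwoWayTransducer Q A B) (f : List A → Option (List B)) : Prop :=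
  ∀ u v, f u = some v ↔ T.Realizes u v

end TwoWayTransducer

/-- Membership in the least submonoid of `B(Q,ρ)` containing the transitions
`⌊δ⌋(a)` for the input letters `a`. -/
inductive InBehav {Q A B : Type} (T : TwoWayTransducer Q A B) : Set (Q × Q) → Prop
  | one : InBehav T (idRel Q)
  | gen (a : A) : InBehav T (T.rel (Tape.sym a))
  | mul {f g} : InBehav T f → InBehav T g → InBehav T (glue T.ρ f g)

/-- The behaviour monoid `B(T)` is aperiodic. -/
def ApBehav {Q A B : Type} (T : TwoWayTransducer Q A B) : Prop :=
  ∃ n : ℕ, ∀ f, InBehav T f → glpow T.ρ f (n + 1) = glpow T.ρ f n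

/-- A first-order transduction: a partial function computed by some
deterministic two-way transducer whose behaviour monoid is aperiodic. -/
def IsFOTransduction {A B : Type} (f : List A → Option (List B)) : Prop :=
  ∃ (n : ℕ) (T : TwoWayTransducer (Fin n) A B),
    T.Deterministic ∧ ApBehav T ∧ T.Computes f

/-- A two-way (nondeterministic) finite automaton. -/
structure TwoWayAutomaton (Q A : Type) where
  ρ : Q → Bool
  init : Q
  init_fwd : ρ init = true
  final : Set Q
  δ : Tape A → Set (Q × Q)

namespace TwoWayAutomaton

variable {Q A : Type}

def Deterministic (M : TwoWayAutomaton Q A) : Prop := ∀ a, IsDet (M.δ a)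

def Reversible (M : TwoWayAutomaton Q A) : Prop := ∀ a, IsRev (M.δ a)

def Planar (M : TwoWayAutomaton Q A) : Prop :=
  ∃ lt : Q → Q → Prop, IsStrictTotalOrder Q lt ∧
    ∀ a : A, IsPlanar M.ρ lt (M.δ (Tape.sym a))

/-- One step of the two-way automaton. -/
def Step (M : TwoWayAutomaton Q A) (c c' : Config Q A) : Prop :=
  ∃ a u v q r, (q, r) ∈ M.δ a ∧
    ((M.ρ q = true ∧ M.ρ r = true ∧ c = (u, q, a :: v) ∧ c' = (u ++ [a], r, v)) ∨
     (M.ρ q = true ∧ M.ρ r = false ∧ c = (u, q, a :: v) ∧ c' = (u, r, a :: v)) ∨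
     (M.ρ q = false ∧ M.ρ r = false ∧ c = (u ++ [a], q, v) ∧ c' = (u, r, a :: v)) ∨
     (M.ρ q = false ∧ M.ρ r = true ∧ c = (u ++ [a], q, v) ∧ c' = (u ++ [a], r, v)))

def Accepts (M : TwoWayAutomaton Q A) (u : List A) : Prop :=
  ∃ qf ∈ M.final, Relation.ReflTransGen M.Step
    ([], M.init, tapeOf u) (tapeOf u, qf, [])

def Language (M : TwoWayAutomaton Q A) : Set (List A) := {u | M.Accepts u}

end TwoWayAutomaton

/-- The underlying automaton `⌊T⌋` of a transducer `T`. -/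
def forget {Q A B : Type} (T : TwoWayTransducer Q A B) : TwoWayAutomaton Q A :=
  { ρ := T.ρ, init := T.init, init_fwd := T.init_fwd, final := T.final,
    δ := fun a => T.rel a }

/-- Star-free languages: the smallest class containing all finite languages
and closed under finite union, complement and concatenation. -/
inductive StarFree {A : Type} : Set (List A) → Prop
  | of_finite (L : Set (List A)) : L.Finite → StarFree L
  | union {L M : Set (List A)} : StarFree L → StarFree M → StarFree (L ∪ M)
  | compl {L : Set (List A)} : StarFree L → StarFree Lᶜ
  | concat {L M : Set (List A)} : StarFree L → StarFree M →
      StarFree {w | ∃ u ∈ L, ∃ v ∈ M, w = u ++ v}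

/-- A (total, deterministic) sequential transducer. -/
structure SeqTransducer (Q A B : Type) where
  init : Q
  next : A → Q → Q
  out : A → Q → List B
  fin : Q → List B

namespace SeqTransducer

variable {Q A B : Type}

/-- Running a sequential transducer on a word from a state: final state and
produced output. -/
def run (T : SeqTransducer Q A B) : List A → Q → Q × List B
  | [], q => (q, [])
  | a :: w, q =>
      let p := run T w (T.next a q)
      (p.1, T.out a q ++ p.2)

/-- The (total) sequential function computed by a sequential transducer. -/
def fn (T : SeqTransducer Q A B) (w : List A) : List B :=
  (T.run w T.init).2 ++ T.fin (T.run w T.init).1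

end SeqTransducer

/-- Membership in the transition monoid of a sequential transducer, i.e. the
monoid of functions `Q → Q` generated by the `∂₁(a)`. -/
inductive SeqGen {Q A B : Type} (T : SeqTransducer Q A B) : (Q → Q) → Prop
  | id : SeqGen T id
  | gen (a : A) : SeqGen T (T.next a)
  | comp {h h'} : SeqGen T h → SeqGen T h' → SeqGen T (h ∘ h')

/-- A sequential transducer is aperiodic when its transition monoid is. -/
def SeqTransducer.Aperiodic {Q A B : Type} (T : SeqTransducer Q A B) : Prop :=
  ∃ n : ℕ, ∀ h, SeqGen T h → h^[n + 1] = h^[n]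


/-- The map `σ†` induced by a register update `σ` on register valuations. -/
def applyUpdate {m : ℕ} {B : Type} (σ : Fin m → List (Fin m ⊕ B))
    (v : Fin m → List B) : Fin m → List B :=
  fun r => ((σ r).map (Sum.elim v (fun b => [b]))).flatten

/-- The list of register occurrences in `σ(r₁)σ(r₂)⋯σ(r_n)`. -/
def regOccs {m : ℕ} {B : Type} (σ : Fin m → List (Fin m ⊕ B)) : List (Fin m) :=
  (((List.finRange m).map σ).flatten).filterMap Sum.getLeft?

/-- A register update is copyless monotone when its list of register
occurrences is strictly increasing. -/
def CopylessMonotone {m : ℕ} {B : Type} (σ : Fin m → List (Fin m ⊕ B)) : Prop :=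
  List.Pairwise (· < ·) (regOccs σ)

/-- A monotone register transducer with registers `Fin (m+1)` (ordered as
usual, with minimum register `0`), input alphabet `A`, output alphabet `B`. -/
structure MonotoneRegTransducer (m : ℕ) (A B : Type) where
  upd : A → Fin (m + 1) → List (Fin (m + 1) ⊕ B)
  mono : ∀ a, CopylessMonotone (upd a)

/-- The total function computed by a monotone register transducer: apply the
updates left to right starting from the all-empty valuation and output the
content of the minimum register. -/
def MonotoneRegTransducer.fn {m : ℕ} {A B : Type}
    (T : MonotoneRegTransducer m A B) (w : List A) : List B :=
  (w.foldl (fun v a => applyUpdate (T.upd a) v) (fun _ => ([] : List B))) 0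

/-!
The transducer sweeps right to `◁` and then evaluates the minimum register recursively: to
produce register `r` at the current position it emits the update word `σ(r)` of the letter to
its left, and for each register `c` occurring there it walks left in state `down c`, produces `c`
at the previous position and comes back in state `up c`.

Monotonicity makes this planar: listing the ports visited while traversing all update words
of a letter, the ports on the right side (output registers) and those on the left side (the
register occurrences, in the increasing order of `regOccs`) both move outwards, and chords
between consecutive ports of such an outward spiral cannot cross. No port occurs twice in that
list, which gives reversibility, and the resulting determinism of steps makes the output unique.
-/

section Planarity

variable {Q : Type} {lt : Q → Q → Prop}

def SortedBySide (lt : Q → Q → Prop) (l : List (Q × Bool)) : Prop :=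
  l.Pairwise fun x y => x.2 = y.2 → lt x.1 y.1

def ports (ρ : Q → Bool) (E : List (Q × Q)) : List (Q × Bool) :=
  E.flatMap fun p => [(p.1, !ρ p.1), (p.2, ρ p.2)]

theorem sortedBySide_iff {l : List (Q × Bool)} :
    SortedBySide lt l ↔ ((l.filter (·.2)).map Prod.fst).Pairwise lt ∧
      ((l.filter (!·.2)).map Prod.fst).Pairwise lt := by
  simp only [SortedBySide, List.pairwise_map, List.pairwise_filter, ← List.pairwise_and_iff]
  refine List.Pairwise.iff fun x y => ?_
  cases x.2 <;> cases y.2 <;> simp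

theorem SortedBySide.nodup [Std.Irrefl lt] {l : List (Q × Bool)} (h : SortedBySide lt l) :
    l.Nodup :=
  h.imp (S := (· ≠ ·)) fun {x _} hxy e => by subst e; exact irrefl x.1 (hxy rfl)

theorem extLt_asymm [Std.Asymm lt] {x y : Q × Bool} (h : ExtLt lt x y) : ¬ ExtLt lt y x := by
  rcases x with ⟨x, _ | _⟩ <;> rcases y with ⟨y, _ | _⟩ <;>
    simp_all [ExtLt] <;> exact asymm h

theorem extLt_irrefl [Std.Asymm lt] (x : Q × Bool) : ¬ ExtLt lt x x :=
  fun h => extLt_asymm h h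

/-- A port placed later in a list sorted by side lies outside all earlier ports, so it cannot
lie strictly between two of them. -/
theorem not_extLt_between [Std.Asymm lt] {a b y : Q × Bool}
    (ha : a.2 = y.2 → lt a.1 y.1) (hb : b.2 = y.2 → lt b.1 y.1)
    (hay : ExtLt lt a y) (hyb : ExtLt lt y b) : False := by
  rcases y with ⟨y, _ | _⟩
  · exact extLt_asymm hay (by rcases a with ⟨a, _ | _⟩ <;> simp_all [ExtLt])
  · exact extLt_asymm hyb (by rcases b with ⟨b, _ | _⟩ <;> simp_all [ExtLt])

theorem not_crossing_of_sortedBySide [Std.Asymm lt] :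
    ∀ {L : List ((Q × Bool) × (Q × Bool))},
      SortedBySide lt (L.flatMap fun e => [e.1, e.2]) →
      ¬ ∃ u r v s, ExtLt lt u r ∧ ExtLt lt r v ∧ ExtLt lt v s ∧
        ((u, v) ∈ L ∨ (v, u) ∈ L) ∧ ((r, s) ∈ L ∨ (s, r) ∈ L)
  | [], _, ⟨_, _, _, _, _, _, _, h, _⟩ => by simp at h
  | e :: L, h, ⟨u, r, v, s, hur, hrv, hvs, huv, hrs⟩ => by
    simp only [SortedBySide, List.flatMap_cons, List.pairwise_append] at h
    obtain ⟨-, hL, hlater⟩ := h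
    have ends_of_mem : ∀ {x y}, (x, y) ∈ L ∨ (y, x) ∈ L →
        x ∈ L.flatMap (fun e => [e.1, e.2]) ∧ y ∈ L.flatMap (fun e => [e.1, e.2]) := by
      rintro x y (h | h) <;> constructor <;> exact List.mem_flatMap.2 ⟨_, h, by simp⟩
    simp only [List.mem_cons] at huv hrs
    have head_or_tail : ∀ {x y}, ((x, y) = e ∨ (x, y) ∈ L) ∨ ((y, x) = e ∨ (y, x) ∈ L) →
        ((x, y) = e ∨ (y, x) = e) ∨ ((x, y) ∈ L ∨ (y, x) ∈ L) := by tauto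
    have later : ∀ {x y}, ((x, y) = e ∨ (y, x) = e) → ∀ z ∈ L.flatMap (fun e => [e.1, e.2]),
        (x.2 = z.2 → lt x.1 z.1) ∧ (y.2 = z.2 → lt y.1 z.1) := by
      rintro x y (rfl | rfl) z hz <;> exact ⟨hlater _ (by simp) z hz, hlater _ (by simp) z hz⟩
    rcases head_or_tail huv with huv | huv <;> rcases head_or_tail hrs with hrs | hrs
    · obtain rfl | rfl : r = u ∨ r = v := by
        rcases huv with rfl | rfl <;> rcases hrs with h | h <;>
          simp only [Prod.mk.injEq] at h <;> tauto
      · exact extLt_irrefl _ hur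
      · exact extLt_irrefl _ hrv
    · have := later huv r (ends_of_mem hrs).1
      exact not_extLt_between this.1 this.2 hur hrv
    · have := later hrs v (ends_of_mem huv).2
      exact not_extLt_between this.1 this.2 hrv hvs
    · exact not_crossing_of_sortedBySide hL ⟨u, r, v, s, hur, hrv, hvs, huv, hrs⟩

theorem isPlanar_of_sortedBySide [Std.Asymm lt] {ρ : Q → Bool} {f : Set (Q × Q)}
    {E : List (Q × Q)} (hf : f ⊆ {p | p ∈ E}) (h : SortedBySide lt (ports ρ E)) :
    IsPlanar ρ lt f := by
  rintro ⟨u, r, v, s, hur, hrv, hvs, huv, hrs⟩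
  let L := E.map fun p => ((p.1, !ρ p.1), (p.2, ρ p.2))
  have hL : L.flatMap (fun e => [e.1, e.2]) = ports ρ E := by
    simp [L, ports, List.flatMap_map]
  have chord : ∀ {x y}, ProfileEdge ρ f x y → (x, y) ∈ L := by
    rintro x y ⟨p, hp, rfl, rfl⟩
    exact List.mem_map.2 ⟨p, hf hp, rfl⟩
  exact not_crossing_of_sortedBySide (hL ▸ h)
    ⟨u, r, v, s, hur, hrv, hvs, huv.imp chord chord, hrs.imp chord chord⟩

theorem List.eq_of_mem_of_nodup_flatMap {α β : Type*} {l : List α} {f : α → List β}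
    (h : (l.flatMap f).Nodup) {x y : α} {b : β} (hx : x ∈ l) (hy : y ∈ l) (hbx : b ∈ f x)
    (hby : b ∈ f y) : x = y := by
  have : Std.Symm (Function.onFun List.Disjoint f) := ⟨fun _ _ h => h.symm⟩
  by_contra hne
  exact (List.nodup_flatMap.1 h).2.forall hx hy hne hbx hby

theorem isRev_of_nodup_ports {ρ : Q → Bool} {f : Set (Q × Q)} {E : List (Q × Q)}
    (hf : f ⊆ {p | p ∈ E}) (h : (ports ρ E).Nodup) : IsRev f := by
  refine ⟨fun q r r' h₁ h₂ => ?_, fun q q' r h₁ h₂ => ?_⟩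
  · simpa using List.eq_of_mem_of_nodup_flatMap h (hf h₁) (hf h₂) (b := (q, !ρ q))
      (by simp) (by simp)
  · simpa using List.eq_of_mem_of_nodup_flatMap h (hf h₁) (hf h₂) (b := (r, ρ r))
      (by simp) (by simp)

end Planarity

namespace TwoWayTransducer

variable {Q A B : Type} (M : TwoWayTransducer Q A B)

/-- The configuration in state `q` with the head just right (`b = true`) or just left
(`b = false`) of the cell `a`: the vertex `(q, b)` of a transition profile of `a`. -/
def cfgAt (L : List (Tape A)) (a : Tape A) (R : List (Tape A)) (b : Bool) (q : Q) :
    Config Q A :=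
  if b then (L ++ [a], q, R) else (L, q, a :: R)

@[simp]
theorem cfgAt_true (L : List (Tape A)) (a : Tape A) (R : List (Tape A)) (q : Q) :
    cfgAt L a R true q = (L ++ [a], q, R) := rfl

@[simp]
theorem cfgAt_false (L : List (Tape A)) (a : Tape A) (R : List (Tape A)) (q : Q) :
    cfgAt L a R false q = (L, q, a :: R) := rfl

@[simp]
theorem cfgAt_state (L : List (Tape A)) (a : Tape A) (R : List (Tape A)) (b : Bool) (q : Q) :
    (cfgAt L a R b q).2.1 = q := by
  cases b <;> rfl

theorem cfgAt_inj {L L' R R' : List (Tape A)} {a a' : Tape A} {b : Bool} {q q' : Q}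
    (h : cfgAt L a R b q = cfgAt L' a' R' b q') : L = L' ∧ a = a' ∧ R = R' := by
  cases b <;> simp_all [cfgAt]

theorem step_iff {c c' : Config Q A} {w : List B} :
    M.Step c w c' ↔ ∃ a L R q r, (q, w, r) ∈ M.δ a ∧
      c = cfgAt L a R (!M.ρ q) q ∧ c' = cfgAt L a R (M.ρ r) r := by
  constructor
  · rintro ⟨a, L, R, q, r, h, hc⟩
    refine ⟨a, L, R, q, r, h, ?_⟩
    rcases hc with ⟨hq, hr, rfl, rfl⟩ | ⟨hq, hr, rfl, rfl⟩ | ⟨hq, hr, rfl, rfl⟩ |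
      ⟨hq, hr, rfl, rfl⟩ <;> simp [cfgAt, hq, hr]
  · rintro ⟨a, L, R, q, r, h, rfl, rfl⟩
    refine ⟨a, L, R, q, r, h, ?_⟩
    cases hq : M.ρ q <;> cases hr : M.ρ r <;> simp [cfgAt]

theorem step_cfgAt {a : Tape A} {q r : Q} {w : List B} (h : (q, w, r) ∈ M.δ a)
    (L R : List (Tape A)) : M.Step (cfgAt L a R (!M.ρ q) q) w (cfgAt L a R (M.ρ r) r) :=
  M.step_iff.2 ⟨_, _, _, _, _, h, rfl, rfl⟩

theorem step_unique
    (hδ : ∀ a q w r w' r', (q, w, r) ∈ M.δ a → (q, w', r') ∈ M.δ a → w = w' ∧ r = r')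
    {c c₁ c₂ : Config Q A} {w₁ w₂ : List B} (h₁ : M.Step c w₁ c₁) (h₂ : M.Step c w₂ c₂) :
    w₁ = w₂ ∧ c₁ = c₂ := by
  obtain ⟨a, L, R, q, r, h, rfl, rfl⟩ := M.step_iff.1 h₁
  obtain ⟨a', L', R', q', r', h', hc, rfl⟩ := M.step_iff.1 h₂
  obtain rfl : q = q' := by simpa using congrArg (·.2.1) hc
  obtain ⟨rfl, rfl, rfl⟩ := cfgAt_inj hc
  obtain ⟨rfl, rfl⟩ := hδ _ _ _ _ _ _ h h'
  exact ⟨rfl, rfl⟩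

theorem not_step_of_end {L : List (Tape A)} {q : Q} (hq : M.ρ q = true) {w : List B}
    {c : Config Q A} : ¬ M.Step (L, q, []) w c := by
  rintro h
  obtain ⟨a, L', R, q', r, -, hc, -⟩ := M.step_iff.1 h
  obtain rfl : q = q' := by simpa using congrArg (·.2.1) hc
  simp [cfgAt, hq] at hc

def StepWithOutput (x y : Config Q A × List B) : Prop :=
  ∃ w, M.Step x.1 w y.1 ∧ y.2 = x.2 ++ w

variable {M}

theorem Run.single {c c' : Config Q A} {w : List B} (h : M.Step c w c') : M.Run c w c' := by
  simpa using Run.step (Run.refl c) h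

theorem Run.trans {c₁ c₂ c₃ : Config Q A} {w₁ w₂ : List B} (h₁ : M.Run c₁ w₁ c₂)
    (h₂ : M.Run c₂ w₂ c₃) : M.Run c₁ (w₁ ++ w₂) c₃ := by
  induction h₂ with
  | refl => simpa using h₁
  | step _ hs ih => simpa using ih.step hs

theorem Run.reflTransGen {c d : Config Q A} {v : List B} (h : M.Run c v d) (p : List B) :
    Relation.ReflTransGen M.StepWithOutput (c, p) (d, p ++ v) := by
  induction h with
  | refl => simpa using Relation.ReflTransGen.refl
  | step _ hs ih => exact ih.tail ⟨_, hs, by simp⟩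

theorem Run.unique
    (hδ : ∀ a q w r w' r', (q, w, r) ∈ M.δ a → (q, w', r') ∈ M.δ a → w = w' ∧ r = r')
    {c d₁ d₂ : Config Q A} {v₁ v₂ : List B} (h₁ : M.Run c v₁ d₁) (h₂ : M.Run c v₂ d₂)
    (hd₁ : ∀ w e, ¬ M.Step d₁ w e) (hd₂ : ∀ w e, ¬ M.Step d₂ w e) : v₁ = v₂ ∧ d₁ = d₂ := by
  have blocked : ∀ {x y : Config Q A × List B}, (∀ w e, ¬ M.Step x.1 w e) →
      Relation.ReflTransGen M.StepWithOutput x y → x = y := by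
    intro x y hx h
    rcases h.cases_head with h | ⟨z, ⟨w, hz, -⟩, -⟩
    · exact h
    · exact absurd hz (hx _ _)
  have hU : Relator.RightUnique M.StepWithOutput := by
    rintro x ⟨y, _⟩ ⟨z, _⟩ ⟨w, hy, rfl⟩ ⟨w', hz, rfl⟩
    obtain ⟨rfl, rfl⟩ := M.step_unique hδ hy hz
    rfl
  rcases Relation.ReflTransGen.total_of_right_unique hU (h₁.reflTransGen []) (h₂.reflTransGen [])
    with h | h
  · simpa [and_comm] using blocked hd₁ h
  · simpa [and_comm, eq_comm] using blocked hd₂ h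

end TwoWayTransducer

namespace MonotoneRegTransducer

open TwoWayTransducer

variable {m : ℕ} {A B : Type}

/- The states are numbered so that the planar order is the usual order of `Fin (2 * m + 4)`. -/
def down (r : Fin (m + 1)) : Fin (2 * m + 4) := ⟨2 * r, by omega⟩

def up (r : Fin (m + 1)) : Fin (2 * m + 4) := ⟨2 * r + 1, by omega⟩

def done : Fin (2 * m + 4) := ⟨2 * m + 2, by omega⟩

def sweep : Fin (2 * m + 4) := ⟨2 * m + 3, by omega⟩

def dir (q : Fin (2 * m + 4)) : Bool := decide (q.val % 2 = 1 ∨ 2 * m + 2 ≤ q.val)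

@[simp] theorem dir_down (r : Fin (m + 1)) : dir (down r) = false := by simp [dir, down]; omega
@[simp] theorem dir_up (r : Fin (m + 1)) : dir (up r) = true := by simp [dir, up]
@[simp] theorem dir_done : dir (done (m := m)) = true := by simp [dir, done]
@[simp] theorem dir_sweep : dir (sweep (m := m)) = true := by simp [dir, sweep]

def chain (s f : Fin (2 * m + 4)) (acc : List B) :
    List (Fin (m + 1) ⊕ B) → List (Fin (2 * m + 4) × List B × Fin (2 * m + 4))
  | [] => [(s, acc, f)]
  | .inl c :: t => (s, acc, down c) :: chain (up c) f [] t
  | .inr b :: t => chain s f (acc ++ [b]) t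

def updateMoves (σ : Fin (m + 1) → List (Fin (m + 1) ⊕ B)) :
    List (Fin (2 * m + 4) × List B × Fin (2 * m + 4)) :=
  (List.finRange (m + 1)).flatMap (fun r => chain (down r) (up r) [] (σ r)) ++ [(sweep, [], sweep)]

def moves (T : MonotoneRegTransducer m A B) :
    Tape A → List (Fin (2 * m + 4) × List B × Fin (2 * m + 4))
  -- `▷` acts as the update resetting every register to the empty word
  | .lend => updateMoves fun _ => []
  | .rend => [(sweep, [], down 0), (up 0, [], done)]
  | .sym a => updateMoves (T.upd a)

def toTwoWay (T : MonotoneRegTransducer m A B) : TwoWayTransducer (Fin (2 * m + 4)) A B where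
  ρ := dir
  init := sweep
  init_fwd := dir_sweep
  final := {done}
  δ a := {x | x ∈ T.moves a}

theorem ports_chain (s f : Fin (2 * m + 4)) (acc : List B) (l : List (Fin (m + 1) ⊕ B)) :
    ports dir ((chain s f acc l).map fun x => (x.1, x.2.2)) =
      (s, !dir s) :: (l.filterMap Sum.getLeft?).flatMap (fun c => [(down c, false), (up c, false)])
        ++ [(f, dir f)] := by
  induction l generalizing s acc with
  | nil => simp [chain, ports]
  | cons x t ih => rcases x with c | b <;> simp_all [chain, ports, List.filterMap_cons]

theorem pairwise_down_up_sweep {l : List (Fin (m + 1))} (h : l.Pairwise (· < ·)) :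
    ((l.flatMap fun c => [down c, up c]) ++ [sweep]).Pairwise (· < ·) := by
  rw [List.pairwise_append, List.pairwise_flatMap]
  refine ⟨⟨fun c _ => ?_, h.imp fun {c c'} hcc' => ?_⟩, List.pairwise_singleton _ _, ?_⟩
  · simp [down, up]
  · have := Fin.lt_def.1 hcc'
    simp [down, up]
    omega
  · simp only [List.mem_flatMap, List.mem_cons, List.not_mem_nil, or_false]
    rintro x ⟨c, -, rfl | rfl⟩ _ rfl <;> simp [down, up, sweep] <;> omega

theorem sortedBySide_updateMoves {σ : Fin (m + 1) → List (Fin (m + 1) ⊕ B)}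
    (hσ : CopylessMonotone σ) :
    SortedBySide (· < ·) (ports dir ((updateMoves σ).map fun x => (x.1, x.2.2))) := by
  have hports : ports dir ((updateMoves σ).map fun x => (x.1, x.2.2)) =
      (List.finRange (m + 1)).flatMap (fun r => ports dir ((chain (down r) (up r) [] (σ r)).map
        fun x => (x.1, x.2.2))) ++ [(sweep, false), (sweep, true)] := by
    simp [updateMoves, ports, List.flatMap_map, List.map_flatMap, List.flatMap_assoc]
  rw [sortedBySide_iff, hports]
  simp only [ports_chain]
  have hocc : (List.finRange (m + 1)).flatMap (fun r => (σ r).filterMap Sum.getLeft?) =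
      regOccs σ := by
    simp [regOccs, List.filterMap_flatten, List.flatMap_def, Function.comp_def]
  have hnil : ∀ l : List (Fin (m + 1)), l.flatMap (fun _ => ([] : List (Fin (2 * m + 4)))) = [] :=
    fun l => List.flatMap_eq_nil_iff.2 fun _ _ => rfl
  simp [List.filter_flatMap, List.map_flatMap, ← List.flatMap_assoc, hocc, hnil]
  exact ⟨pairwise_down_up_sweep (List.pairwise_lt_finRange _), pairwise_down_up_sweep hσ⟩

variable (T : MonotoneRegTransducer m A B)

theorem rel_toTwoWay_subset (a : Tape A) :
    T.toTwoWay.rel a ⊆ {p | p ∈ (T.moves a).map fun x => (x.1, x.2.2)} :=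
  fun _ ⟨_, h⟩ => List.mem_map.2 ⟨_, h, rfl⟩

theorem nodup_ports_moves (a : Tape A) :
    (ports dir ((T.moves a).map fun x => (x.1, x.2.2))).Nodup := by
  cases a with
  | lend => exact (sortedBySide_updateMoves (by simp [CopylessMonotone, regOccs])).nodup
  | rend => simp [moves, ports, down, up, done, sweep, Fin.ext_iff]
  | sym a => exact (sortedBySide_updateMoves (T.mono a)).nodup

theorem toTwoWay_reversible : T.toTwoWay.Reversible := fun a =>
  isRev_of_nodup_ports (T.rel_toTwoWay_subset a) (T.nodup_ports_moves a)

theorem toTwoWay_planar : T.toTwoWay.Planar :=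
  ⟨(· < ·), inferInstance, fun a =>
    isPlanar_of_sortedBySide (T.rel_toTwoWay_subset _) (sortedBySide_updateMoves (T.mono a))⟩

theorem eq_of_mem_moves {a : Tape A} {q r r' : Fin (2 * m + 4)} {w w' : List B}
    (h : (q, w, r) ∈ T.moves a) (h' : (q, w', r') ∈ T.moves a) : w = w' ∧ r = r' := by
  have hnd := T.nodup_ports_moves a
  simp only [ports, List.flatMap_map] at hnd
  simpa using List.eq_of_mem_of_nodup_flatMap hnd h h' (b := (q, !dir q)) (by simp) (by simp)

def valuation (w : List A) : Fin (m + 1) → List B :=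
  w.foldl (fun v a => applyUpdate (T.upd a) v) fun _ => []

theorem step_of_mem_moves {a : Tape A} {q r : Fin (2 * m + 4)} {w : List B}
    (h : (q, w, r) ∈ T.moves a) (L R : List (Tape A)) :
    T.toTwoWay.Step (cfgAt L a R (!dir q) q) w (cfgAt L a R (dir r) r) :=
  T.toTwoWay.step_cfgAt h L R

theorem run_chain {L R : List (Tape A)} {a : Tape A} {v : Fin (m + 1) → List B}
    (hreg : ∀ c, T.toTwoWay.Run (L, down c, a :: R) (v c) (L, up c, a :: R)) :
    ∀ (l : List (Fin (m + 1) ⊕ B)) (s f : Fin (2 * m + 4)) (acc : List B),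
      (∀ x ∈ chain s f acc l, x ∈ T.moves a) →
      T.toTwoWay.Run (cfgAt L a R (!dir s) s) (acc ++ (l.map (Sum.elim v fun b => [b])).flatten)
        (cfgAt L a R (dir f) f)
  | [], s, f, acc, h => by
    simpa using Run.single (T.step_of_mem_moves (h _ (by simp [chain])) L R)
  | .inl c :: t, s, f, acc, h => by
    have hfirst : T.toTwoWay.Run (cfgAt L a R (!dir s) s) acc (L, down c, a :: R) := by
      simpa using Run.single (T.step_of_mem_moves (h (s, acc, down c) (by simp [chain])) L R)
    have hrest : T.toTwoWay.Run (L, up c, a :: R) (t.map (Sum.elim v fun b => [b])).flatten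
        (cfgAt L a R (dir f) f) := by
      simpa using run_chain hreg t (up c) f [] fun x hx => h x (by simp [chain, hx])
    simpa using (hfirst.trans (hreg c)).trans hrest
  | .inr b :: t, s, f, acc, h => by
    simpa using run_chain hreg t s f (acc ++ [b]) fun x hx => h x (by simpa [chain] using hx)

theorem mem_updateMoves_of_mem_chain {σ : Fin (m + 1) → List (Fin (m + 1) ⊕ B)} {r : Fin (m + 1)}
    {x : Fin (2 * m + 4) × List B × Fin (2 * m + 4)} (h : x ∈ chain (down r) (up r) [] (σ r)) :
    x ∈ updateMoves σ :=
  List.mem_append_left _ (List.mem_flatMap.2 ⟨r, List.mem_finRange r, h⟩)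

theorem run_register (w : List A) :
    ∀ (c : Fin (m + 1)) (R : List (Tape A)),
      T.toTwoWay.Run (Tape.lend :: w.map Tape.sym, down c, R) (T.valuation w c)
        (Tape.lend :: w.map Tape.sym, up c, R) := by
  induction w using List.reverseRecOn with
  | nil =>
    intro c R
    have h : (down c, [], up c) ∈ T.moves Tape.lend :=
      mem_updateMoves_of_mem_chain (r := c) (by simp [chain])
    simpa [valuation] using Run.single (T.step_of_mem_moves h [] R)
  | append_singleton w b ih =>
    intro c R
    have h := T.run_chain (fun c' => ih c' (Tape.sym b :: R)) (T.upd b c) (down c) (up c) []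
      fun _ => mem_updateMoves_of_mem_chain
    simpa [valuation, List.foldl_append, applyUpdate] using h

theorem run_sweep (R : List (Tape A)) :
    ∀ (u : List A) (L : List (Tape A)),
      T.toTwoWay.Run (L, sweep, u.map Tape.sym ++ R) [] (L ++ u.map Tape.sym, sweep, R)
  | [], L => by simpa using (Run.refl (L, sweep, R) : T.toTwoWay.Run _ _ _)
  | a :: u, L => by
    have h : (sweep, [], sweep) ∈ T.moves (Tape.sym a) := by simp [moves, updateMoves]
    have hstep : T.toTwoWay.Step (L, sweep, Tape.sym a :: (u.map Tape.sym ++ R)) []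
        (L ++ [Tape.sym a], sweep, u.map Tape.sym ++ R) := by
      simpa using T.step_of_mem_moves h L (u.map Tape.sym ++ R)
    simpa using (Run.single hstep).trans (run_sweep R u (L ++ [Tape.sym a]))

theorem realizes_fn (u : List A) : T.toTwoWay.Realizes u (T.fn u) := by
  have hstart : T.toTwoWay.Step ([], sweep, tapeOf u) []
      ([Tape.lend], sweep, u.map Tape.sym ++ [Tape.rend]) := by
    have h : (sweep, [], sweep) ∈ T.moves Tape.lend := by simp [moves, updateMoves]
    simpa [tapeOf] using T.step_of_mem_moves h [] (u.map Tape.sym ++ [Tape.rend])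
  have hdown : T.toTwoWay.Step (Tape.lend :: u.map Tape.sym, sweep, [Tape.rend]) []
      (Tape.lend :: u.map Tape.sym, down 0, [Tape.rend]) := by
    have h : (sweep, [], down 0) ∈ T.moves Tape.rend := by simp [moves]
    simpa using T.step_of_mem_moves h (Tape.lend :: u.map Tape.sym) []
  have hdone : T.toTwoWay.Step (Tape.lend :: u.map Tape.sym, up 0, [Tape.rend]) []
      (tapeOf u, done, []) := by
    have h : (up 0, [], done) ∈ T.moves Tape.rend := by simp [moves]
    simpa [tapeOf] using T.step_of_mem_moves h (Tape.lend :: u.map Tape.sym) []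
  have := (((Run.single hstart).trans (T.run_sweep [Tape.rend] u [Tape.lend])).trans
    (Run.single hdown)).trans ((T.run_register u 0 [Tape.rend]).trans (Run.single hdone))
  simp only [List.append_nil, List.nil_append] at this
  exact ⟨done, rfl, this⟩

theorem toTwoWay_computes : T.toTwoWay.Computes fun w => some (T.fn w) := by
  refine fun u v => ⟨fun h => Option.some.inj h ▸ T.realizes_fn u, fun ⟨q, hq, h⟩ => ?_⟩
  obtain ⟨_, rfl, h'⟩ := T.realizes_fn u
  obtain rfl : q = done := hq
  have hend : ∀ w e, ¬ T.toTwoWay.Step (tapeOf u, done, []) w e :=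
    fun _ _ => T.toTwoWay.not_step_of_end dir_done
  simp [(Run.unique (fun _ _ _ _ _ _ => T.eq_of_mem_moves) h' h hend hend).1]

end MonotoneRegTransducer

theorem mrt_to_planar_reversible_general {m : ℕ} {A B : Type}
    (T : MonotoneRegTransducer m A B) :
    ∃ (n : ℕ) (T' : TwoWayTransducer (Fin n) A B),
      T'.Planar ∧ T'.Reversible ∧ T'.Deterministic ∧
      T'.Computes (fun w => some (T.fn w)) :=
  ⟨2 * m + 4, T.toTwoWay, T.toTwoWay_planar, T.toTwoWay_reversible,
    fun a => (T.toTwoWay_reversible a).1, T.toTwoWay_computes⟩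

/-- every total function computed by a monotone register
transducer is computed by some planar reversible deterministic two-way
finite transducer. -/
theorem mrt_to_planar_reversible {m : ℕ} {A B : Type} [Fintype A] [Fintype B]
    (T : MonotoneRegTransducer m A B) :
    ∃ (n : ℕ) (T' : TwoWayTransducer (Fin n) A B),
      T'.Planar ∧ T'.Reversible ∧ T'.Deterministic ∧
      T'.Computes (fun w => some (T.fn w)) :=
  mrt_to_planar_reversible_general T

end Planar2DFT
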